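/- Let Σ be a simplicial tropical fan of pure dimension d in ℝ^n and f a conewise integral linear function on Σ with ord_τ(f) ∈ {0,1} for every τ ∈ Σ_{d−1} and ord_τ(f) = 1 for at least one τ. Then Σ̃ := TM_f(Σ) is a simplicial rational fan in ℝ^{n+1} whose rays are the rays Γ(ρ), ρ ∈ Σ₁, with primitive generators (e_ρ, f(e_ρ)), together with the special ray ℝ_{≥0}·e with primitive generator e. The ring homomorphism ℤ[x_ρ : ρ ∈ Σ₁] → ℤ[x_r : r a ray of Σ̃] defined by x_ρ ↦ x_{Γ(ρ)} descends to a well-defined surjective homomorphism of graded rings A•(Σ) → A•(Σ̃). -/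

import Mathlib

/- Formalization of polyhedral-geometry notions: rational fans in ℝⁿ with lattice ℤⁿ,
tropical fans (balancing condition), conewise integral linear functions, Minkowski
weights, etc., following the paper "Homology of tropical fans" by Amini–Piquerez. -/

open Classical MvPolynomial
open scoped TensorProduct DirectSum

noncomputable section

/-- The ambient space `ℝ^n`. -/
abbrev V (n : ℕ) : Type := Fin n → ℝ

/-- The inclusion of the lattice `ℤ^n` into `ℝ^n`. -/
def intVec {n : ℕ} (v : Fin n → ℤ) : V n := fun i => (v i : ℝ)

lemma intVec_zero {n : ℕ} : intVec (0 : Fin n → ℤ) = 0 := by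
  funext i; simp [intVec]

lemma intVec_add {n : ℕ} (a b : Fin n → ℤ) : intVec (a + b) = intVec a + intVec b := by
  funext i; simp [intVec]

lemma intVec_neg {n : ℕ} (a : Fin n → ℤ) : intVec (-a) = -intVec a := by
  funext i; simp [intVec]

/-- The pairing between `M = Hom(ℤ^n, ℤ)` (an element of which is represented by its
coefficient vector) and the lattice `ℤ^n`. -/
def pairZ {n : ℕ} (ℓ v : Fin n → ℤ) : ℤ := ∑ i, ℓ i * v i

/-- The pairing between an element of `M` and a vector of `ℝ^n`, i.e. the linear form
on `ℝ^n` defined by an element of `M`. -/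
def pairR {n : ℕ} (ℓ : Fin n → ℤ) (x : V n) : ℝ := ∑ i, (ℓ i : ℝ) * x i

/-- `σ` is a rational cone: the set of nonnegative combinations of a finite set of
integer vectors. -/
def IsRationalCone {n : ℕ} (σ : Set (V n)) : Prop :=
  ∃ S : Finset (Fin n → ℤ),
    σ = {x | ∃ lam : (Fin n → ℤ) → ℝ, (∀ v, 0 ≤ lam v) ∧ x = ∑ v ∈ S, lam v • intVec v}

/-- A cone is strongly convex if `σ ∩ (-σ) = {0}`. -/
def StronglyConvex {n : ℕ} (σ : Set (V n)) : Prop := σ ∩ (-σ) = {0}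

/-- `τ` is a face of the cone `σ`: `τ = σ ∩ ker ℓ` for a linear form `ℓ` nonnegative
on `σ`. -/
def IsFaceOf {n : ℕ} (τ σ : Set (V n)) : Prop :=
  ∃ ℓ : (V n) →ₗ[ℝ] ℝ, (∀ x ∈ σ, 0 ≤ ℓ x) ∧ τ = σ ∩ {x | ℓ x = 0}

/-- A (rational) fan in `ℝ^n`: a finite nonempty collection of strongly convex rational
cones, closed under taking faces, such that the intersection of any two cones is a face
of each of them. -/
structure IsFan {n : ℕ} (F : Finset (Set (V n))) : Prop where
  nonempty : F.Nonempty
  rat : ∀ σ ∈ F, IsRationalCone σ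
  convex : ∀ σ ∈ F, StronglyConvex σ
  faces_mem : ∀ σ ∈ F, ∀ τ : Set (V n), IsFaceOf τ σ → τ ∈ F
  inter_face_left : ∀ σ ∈ F, ∀ σ' ∈ F, IsFaceOf (σ ∩ σ') σ
  inter_face_right : ∀ σ ∈ F, ∀ σ' ∈ F, IsFaceOf (σ ∩ σ') σ'

/-- The dimension of a cone: the dimension of its real linear span. -/
def dimC {n : ℕ} (σ : Set (V n)) : ℕ := Module.finrank ℝ ↥(Submodule.span ℝ σ)

/-- `v ∈ N_σ := ℤ^n ∩ span_ℝ(σ)`. -/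
def memLat {n : ℕ} (σ : Set (V n)) (v : Fin n → ℤ) : Prop :=
  intVec v ∈ Submodule.span ℝ σ

/-- `v` is a normal vector `n_{σ/τ}` for the codimension-one face `τ` of `σ`:
`v ∈ N_σ ∩ (σ + span_ℝ(τ))` and `N_τ + ℤ·v = N_σ`. -/
def IsNormalVector {n : ℕ} (σ τ : Set (V n)) (v : Fin n → ℤ) : Prop :=
  memLat σ v ∧ (∃ y ∈ σ, ∃ z ∈ Submodule.span ℝ τ, intVec v = y + z) ∧
  ∀ w : Fin n → ℤ, memLat σ w ↔ ∃ u : Fin n → ℤ, ∃ k : ℤ, memLat τ u ∧ w = u + k • v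

/-- The cones of `F` of dimension `d` containing `τ`. -/
def facets {n : ℕ} (F : Finset (Set (V n))) (d : ℕ) (τ : Set (V n)) :
    Finset (Set (V n)) :=
  F.filter fun σ => dimC σ = d ∧ τ ⊆ σ

/-- `Σ_k`: the `k`-dimensional cones of the fan. -/
def conesK {n : ℕ} (F : Finset (Set (V n))) (k : ℕ) : Finset (Set (V n)) :=
  F.filter fun σ => dimC σ = k

/-- A tropical fan of pure dimension `d`: a rational fan, pure of dimension `d`
(every maximal cone has dimension `d`), satisfying the balancing condition: for every
`τ ∈ Σ_{d-1}` and any choice of normal vectors, `∑_{σ ⊃ τ} n_{σ/τ} ∈ N_τ`. -/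
def IsTropicalFan {n : ℕ} (F : Finset (Set (V n))) (d : ℕ) : Prop :=
  IsFan F ∧ (∀ σ ∈ F, (∀ η ∈ F, σ ⊆ η → σ = η) → dimC σ = d) ∧
  ∀ τ ∈ F, dimC τ = d - 1 →
    ∀ v : Set (V n) → Fin n → ℤ,
      (∀ σ ∈ facets F d τ, IsNormalVector σ τ (v σ)) →
      memLat τ (∑ σ ∈ facets F d τ, v σ)

/-- `f` is conewise integral linear on the fan `F`: on each cone it agrees with an
element of `M`. -/
def ConewiseLinear {n : ℕ} (F : Finset (Set (V n))) (f : V n → ℝ) : Prop :=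
  ∀ σ ∈ F, ∃ ℓ : Fin n → ℤ, ∀ x ∈ σ, f x = pairR ℓ x

/-- A Minkowski weight of dimension `k` on the fan `F`: an integer weight on `Σ_k`
satisfying the balancing condition. -/
def IsMinkowskiWeight {n : ℕ} (F : Finset (Set (V n))) (k : ℕ) (w : Set (V n) → ℤ) :
    Prop :=
  ∀ τ ∈ F, dimC τ = k - 1 →
    ∀ u : Set (V n) → Fin n → ℤ,
      (∀ σ ∈ facets F k τ, IsNormalVector σ τ (u σ)) →
      memLat τ (∑ σ ∈ facets F k τ, w σ • u σ)

/-- The rays (one-dimensional cones) of the fan. -/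
def raysF {n : ℕ} (F : Finset (Set (V n))) : Finset (Set (V n)) :=
  F.filter fun ρ => dimC ρ = 1

/-- The type of rays of the fan `F`. -/
abbrev RayT {n : ℕ} (F : Finset (Set (V n))) : Type := {ρ : Set (V n) // ρ ∈ raysF F}

/-- The rays of the cone `σ` in the fan `F`. -/
def raysOfCone {n : ℕ} (F : Finset (Set (V n))) (σ : Set (V n)) :
    Finset (Set (V n)) :=
  (raysF F).filter fun ρ => ρ ⊆ σ

/-- The fan `F` is simplicial: every cone has exactly `dim σ` rays and is generated by
them (every element of `σ` is a sum of elements of the rays of `σ`). -/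
def IsSimplicial {n : ℕ} (F : Finset (Set (V n))) : Prop :=
  ∀ σ ∈ F, (raysOfCone F σ).card = dimC σ ∧
    σ = {x | ∃ y : Set (V n) → V n, (∀ ρ ∈ raysOfCone F σ, y ρ ∈ ρ) ∧
             x = ∑ ρ ∈ raysOfCone F σ, y ρ}

/-- `v = e_ρ` is the primitive generator of the ray `ρ`: the generator of the rank-one
lattice `N_ρ` lying in `ρ`. -/
def IsPrimitiveGen {n : ℕ} (ρ : Set (V n)) (v : Fin n → ℤ) : Prop :=
  v ≠ 0 ∧ intVec v ∈ ρ ∧ ∀ w : Fin n → ℤ, memLat ρ w → ∃ k : ℤ, w = k • v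

/-- The fan `F` with primitive ray generators `e` is unimodular: simplicial, and for
every cone `σ`, the vectors `e_ρ`, `ρ` a ray of `σ`, form a `ℤ`-basis of `N_σ`. -/
def IsUnimodular {n : ℕ} (F : Finset (Set (V n))) (e : Set (V n) → Fin n → ℤ) : Prop :=
  IsSimplicial F ∧
  ∀ σ ∈ F, ∀ w : Fin n → ℤ, memLat σ w →
    ∃! c : Set (V n) → ℤ, (∀ ρ, ρ ∉ raysOfCone F σ → c ρ = 0) ∧
      w = ∑ ρ ∈ raysOfCone F σ, c ρ • e ρ

/-- The monomial `x_σ = ∏_{ρ ray of σ} x_ρ` in the polynomial ring on the rays. -/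
def xCone {n : ℕ} (F : Finset (Set (V n))) (σ : Set (V n)) :
    MvPolynomial (RayT F) ℤ :=
  ∏ ρ ∈ Finset.univ.filter (fun ρ : RayT F => ρ.1 ⊆ σ), X ρ

/-- The finite set `S` of rays forms the set of rays of a cone of `F`. -/
def FormsCone {n : ℕ} (F : Finset (Set (V n))) (S : Finset (RayT F)) : Prop :=
  ∃ σ ∈ F, ∀ ρ : RayT F, ρ ∈ S ↔ ρ.1 ⊆ σ

/-- The ideal `I` generated by the monomials `x_{ρ₁} ⋯ x_{ρ_k}` over subsets of
distinct rays not forming the set of rays of a cone of `F`. -/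
def idealI {n : ℕ} (F : Finset (Set (V n))) : Ideal (MvPolynomial (RayT F) ℤ) :=
  Ideal.span {p | ∃ S : Finset (RayT F), ¬ FormsCone F S ∧ p = ∏ ρ ∈ S, X ρ}

/-- The linear polynomial `x_ℓ = ∑_ρ ℓ(e_ρ) x_ρ` associated with `ℓ ∈ M`. -/
def xLin {n : ℕ} (F : Finset (Set (V n))) (e : Set (V n) → Fin n → ℤ)
    (ℓ : Fin n → ℤ) : MvPolynomial (RayT F) ℤ :=
  ∑ ρ : RayT F, C (pairZ ℓ (e ρ.1)) * X ρ

/-- The ideal `J` generated by the linear polynomials `∑_ρ ℓ(e_ρ) x_ρ`, `ℓ ∈ M`. -/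
def idealJ {n : ℕ} (F : Finset (Set (V n))) (e : Set (V n) → Fin n → ℤ) :
    Ideal (MvPolynomial (RayT F) ℤ) :=
  Ideal.span {p | ∃ ℓ : Fin n → ℤ, p = xLin F e ℓ}

/-- The defining ideal `I + J` of the Chow ring. -/
def chowIdeal {n : ℕ} (F : Finset (Set (V n))) (e : Set (V n) → Fin n → ℤ) :
    Ideal (MvPolynomial (RayT F) ℤ) := idealI F + idealJ F e

/-- The Chow ring `A•(Σ) = ℤ[x_ρ : ρ ∈ Σ₁]/(I + J)`. -/
abbrev ChowRing {n : ℕ} (F : Finset (Set (V n))) (e : Set (V n) → Fin n → ℤ) : Type :=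
  MvPolynomial (RayT F) ℤ ⧸ chowIdeal F e

/-- The subgroup `Z^k(Σ) = ⊕_{σ ∈ Σ_k} ℤ·x_σ` of the polynomial ring. -/
def Zgroup {n : ℕ} (F : Finset (Set (V n))) (k : ℕ) :
    AddSubgroup (MvPolynomial (RayT F) ℤ) :=
  AddSubgroup.closure {p | ∃ σ ∈ conesK F k, p = xCone F σ}

/-- The degree-`k` graded piece `A^k(Σ)` of the Chow ring: the image of the homogeneous
polynomials of degree `k` in the quotient. -/
def Apiece {n : ℕ} (F : Finset (Set (V n))) (e : Set (V n) → Fin n → ℤ) (k : ℕ) :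
    AddSubgroup (ChowRing F e) :=
  AddSubgroup.closure
    {y | ∃ P : MvPolynomial (RayT F) ℤ, P.IsHomogeneous k ∧
         y = Ideal.Quotient.mk (chowIdeal F e) P}

/-- `m` is the order of vanishing `ord_τ(f)` of `f` along the codimension-one cone `τ`,
computed with some (equivalently, by well-definedness, any) choice of normal vectors
`v` and of representatives `L σ ∈ M` of `f` on the cones `σ`. -/
def IsOrderAt {n : ℕ} (F : Finset (Set (V n))) (d : ℕ) (f : V n → ℝ)
    (τ : Set (V n)) (m : ℤ) : Prop :=
  ∃ v L : Set (V n) → Fin n → ℤ,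
    (∀ σ ∈ facets F d τ, IsNormalVector σ τ (v σ)) ∧
    (∀ σ ∈ F, ∀ x ∈ σ, f x = pairR (L σ) x) ∧
    m = -(∑ σ ∈ facets F d τ, pairZ (L σ) (v σ))
        + pairZ (L τ) (∑ σ ∈ facets F d τ, v σ)

/-- The graph embedding `x ↦ (x, f(x))` of `ℝ^n` in `ℝ^{n+1}`. -/
def graphMap {n : ℕ} (f : V n → ℝ) (x : V n) : V (n + 1) := Fin.snoc x (f x)

/-- The vector `e = (0, …, 0, 1) ∈ ℝ^{n+1}`. -/
def eVecR (n : ℕ) : V (n + 1) := Fin.snoc (0 : V n) 1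

/-- The cone `Γ(δ) + ℝ₊·e` of the tropical modification lying above `δ`. -/
def upCone {n : ℕ} (f : V n → ℝ) (δ : Set (V n)) : Set (V (n + 1)) :=
  {y | ∃ x ∈ δ, ∃ t : ℝ, 0 ≤ t ∧ y = graphMap f x + t • eVecR n}

/-- With `o` an order-of-vanishing function, the divisor `Δ` of `f`: the collection of
all faces of those codimension-one cones `τ` with `ord_τ(f) = 1`. -/
def divFaces {n : ℕ} (F : Finset (Set (V n))) (d : ℕ) (o : Set (V n) → ℤ) :
    Finset (Set (V n)) :=
  F.filter fun δ => ∃ τ ∈ F, dimC τ = d - 1 ∧ o τ = 1 ∧ IsFaceOf δ τ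

/-- The (open) tropical modification `TM_f(Σ)`: the cones `Γ(σ) = {(x, f(x)) : x ∈ σ}`
for `σ ∈ Σ` together with the cones `Γ(δ) + ℝ₊·e` for `δ ∈ Δ`. -/
def TMfan {n : ℕ} (F : Finset (Set (V n))) (f : V n → ℝ) (Δ : Finset (Set (V n))) :
    Finset (Set (V (n + 1))) :=
  F.image (fun σ => graphMap f '' σ) ∪ Δ.image (upCone f)

/-- The special ray `ℝ₊·e` of a tropical modification. -/
def specialRay (n : ℕ) : Set (V (n + 1)) := {y | ∃ t : ℝ, 0 ≤ t ∧ y = t • eVecR n}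

/-!
On each cone `σ` of `Σ` the function `f` is an integral linear form `ℓ`, so `Γ(σ)` is the image
of `σ` under the injective linear map `x ↦ (x, ℓ x)`, and `Γ(δ) + ℝ₊e` is the Minkowski sum of
`Γ(δ)` and the special ray. Rationality, strong convexity, dimensions, rays, generation by rays
and primitive generators therefore pass from `Σ` to `TM_f(Σ)`. A face of `Γ(δ) + ℝ₊e` cut out by
a form `L ≥ 0` is `Γ(τ) + ℝ₊e` or `Γ(τ)` according as `L e = 0` or `L e > 0`, where `τ` is a face
of `δ`; it lies in `TM_f(Σ)` because `Δ` is closed under faces, faces of faces of a rational cone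
being faces. The special ray is `Γ({0}) + ℝ₊e`, and `{0} ∈ Δ` because `{0}` is a face of every
strongly convex rational cone (Hahn–Banach).

On polynomial rings, `x_ρ ↦ x_{Γ(ρ)}` sends non-faces to non-faces and the linear relation of
`ℓ ∈ M` to that of `(ℓ, 0)`, so it descends to the Chow rings; the relation of `(0, 1)` reads
`x_e = -∑ f(e_ρ) x_{Γ(ρ)}`, so every generator of `A•(Σ̃)` is in the image.
-/

open scoped Pointwise

lemma Submodule.span_add_of_zero_mem {R M : Type*} [Semiring R] [AddCommMonoid M] [Module R M]
    {s t : Set M} (hs : 0 ∈ s) (ht : 0 ∈ t) : span R (s + t) = span R s ⊔ span R t := by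
  refine le_antisymm (span_le.2 ?_) (sup_le (span_mono ?_) (span_mono ?_))
  · rintro _ ⟨a, ha, b, hb, rfl⟩
    exact add_mem (mem_sup_left (subset_span ha)) (mem_sup_right (subset_span hb))
  · exact fun a ha => ⟨a, ha, 0, ht, add_zero a⟩
  · exact fun b hb => ⟨0, hs, b, hb, zero_add b⟩

section Vectors
variable {n : ℕ}

lemma intVec_injective : Function.Injective (intVec (n := n)) := fun _ _ h =>
  funext fun i => by simpa [intVec] using congrFun h i

lemma intVec_smul (k : ℤ) (a : Fin n → ℤ) : intVec (k • a) = (k : ℝ) • intVec a := by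
  funext i; simp [intVec]

lemma intVec_snoc (v : Fin n → ℤ) (m : ℤ) :
    intVec (Fin.snoc v m : Fin (n + 1) → ℤ) = Fin.snoc (intVec v) (m : ℝ) := by
  funext i; refine Fin.lastCases ?_ (fun j => ?_) i <;> simp [intVec]

lemma intVec_snoc_zero_one : intVec (Fin.snoc (0 : Fin n → ℤ) 1 : Fin (n + 1) → ℤ) = eVecR n := by
  rw [intVec_snoc, intVec_zero, eVecR, Int.cast_one]

def projL (n : ℕ) : V (n + 1) →ₗ[ℝ] V n := LinearMap.funLeft ℝ ℝ Fin.castSucc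

lemma projL_intVec (w : Fin (n + 1) → ℤ) : projL n (intVec w) = intVec (Fin.init w) := rfl

def lastL (n : ℕ) : V (n + 1) →ₗ[ℝ] ℝ := LinearMap.proj (Fin.last n)

@[simp] lemma projL_snoc (x : V n) (a : ℝ) : projL n (Fin.snoc x a : V (n + 1)) = x :=
  Fin.init_snoc (α := fun _ => ℝ) _ _

@[simp] lemma lastL_snoc (x : V n) (a : ℝ) : lastL n (Fin.snoc x a : V (n + 1)) = a := by
  simp [lastL]

lemma snoc_projL_lastL (y : V (n + 1)) : (Fin.snoc (projL n y) (lastL n y) : V (n + 1)) = y :=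
  Fin.snoc_init_self y

lemma eq_of_projL_lastL {y z : V (n + 1)} (h₁ : projL n y = projL n z)
    (h₂ : lastL n y = lastL n z) : y = z := by
  rw [← snoc_projL_lastL y, ← snoc_projL_lastL z, h₁, h₂]

@[simp] lemma projL_eVecR : projL n (eVecR n) = 0 := projL_snoc _ _

@[simp] lemma lastL_eVecR : lastL n (eVecR n) = 1 := lastL_snoc _ _

lemma eVecR_ne_zero : eVecR n ≠ 0 := fun h => by simpa [h] using lastL_eVecR (n := n)

@[simp] lemma projL_graphMap (f : V n → ℝ) (x : V n) : projL n (graphMap f x) = x :=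
  projL_snoc _ _

@[simp] lemma lastL_graphMap (f : V n → ℝ) (x : V n) : lastL n (graphMap f x) = f x :=
  lastL_snoc _ _

lemma graphMap_injective (f : V n → ℝ) : Function.Injective (graphMap f) :=
  Function.LeftInverse.injective (g := projL n) (projL_graphMap f)

def pairL (ℓ : Fin n → ℤ) : V n →ₗ[ℝ] ℝ where
  toFun := pairR ℓ
  map_add' x y := by simp [pairR, mul_add, Finset.sum_add_distrib]
  map_smul' c x := by simp [pairR, Finset.mul_sum, mul_left_comm]

@[simp] lemma pairL_apply (ℓ : Fin n → ℤ) (x : V n) : pairL ℓ x = pairR ℓ x := rfl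

lemma pairR_intVec (ℓ v : Fin n → ℤ) : pairR ℓ (intVec v) = pairZ ℓ v := by
  simp [pairR, pairZ, intVec]

@[simp] lemma pairZ_zero_left {m : ℕ} (v : Fin m → ℤ) : pairZ 0 v = 0 := by simp [pairZ]

@[simp] lemma pairZ_zero_right {m : ℕ} (ℓ : Fin m → ℤ) : pairZ ℓ 0 = 0 := by simp [pairZ]

lemma pairZ_snoc_left (a : Fin n → ℤ) (b : ℤ) (w : Fin (n + 1) → ℤ) :
    pairZ (Fin.snoc a b) w = pairZ a (Fin.init w) + b * w (Fin.last n) := by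
  simp [pairZ, Fin.sum_univ_castSucc, Fin.init]

def graphL (ℓ : Fin n → ℤ) : V n →ₗ[ℝ] V (n + 1) :=
  LinearMap.pi (Fin.lastCases (motive := fun _ => V n →ₗ[ℝ] ℝ) (pairL ℓ) LinearMap.proj)

lemma graphL_apply (ℓ : Fin n → ℤ) (x : V n) : graphL ℓ x = Fin.snoc x (pairR ℓ x) := by
  funext i; refine Fin.lastCases ?_ (fun j => ?_) i <;> simp [graphL]

lemma graphL_intVec (ℓ v : Fin n → ℤ) :
    graphL ℓ (intVec v) = intVec (Fin.snoc v (pairZ ℓ v) : Fin (n + 1) → ℤ) := by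
  rw [graphL_apply, pairR_intVec, intVec_snoc]

@[simp] lemma projL_graphL (ℓ : Fin n → ℤ) (x : V n) : projL n (graphL ℓ x) = x := by
  rw [graphL_apply, projL_snoc]

lemma graphL_injective (ℓ : Fin n → ℤ) : Function.Injective (graphL ℓ) :=
  Function.LeftInverse.injective (g := projL n) (projL_graphL ℓ)

lemma eVecR_notMem_range_graphL (ℓ : Fin n → ℤ) : eVecR n ∉ LinearMap.range (graphL ℓ) := by
  rintro ⟨x, hx⟩
  have hx0 : x = 0 := by simpa using congrArg (projL n) hx
  exact eVecR_ne_zero (by rw [← hx, hx0, map_zero])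

lemma graphMap_eqOn {f : V n → ℝ} {σ : Set (V n)} {ℓ : Fin n → ℤ}
    (hfl : Set.EqOn f (pairR ℓ) σ) : Set.EqOn (graphMap f) (graphL ℓ) σ := fun x hx => by
  rw [graphMap, graphL_apply, hfl hx]

end Vectors

section Cones
variable {n : ℕ}

def coneOf (S : Finset (Fin n → ℤ)) : Set (V n) :=
  {x | ∃ lam : (Fin n → ℤ) → ℝ, (∀ v, 0 ≤ lam v) ∧ x = ∑ v ∈ S, lam v • intVec v}

lemma isRationalCone_iff {σ : Set (V n)} :
    IsRationalCone σ ↔ ∃ S : Finset (Fin n → ℤ), σ = coneOf S := Iff.rfl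

lemma zero_mem_coneOf (S : Finset (Fin n → ℤ)) : (0 : V n) ∈ coneOf S :=
  ⟨0, fun _ => le_rfl, by simp⟩

lemma IsRationalCone.zero_mem {σ : Set (V n)} (h : IsRationalCone σ) : (0 : V n) ∈ σ := by
  obtain ⟨S, rfl⟩ := h
  exact zero_mem_coneOf S

lemma intVec_mem_coneOf {S : Finset (Fin n → ℤ)} {v : Fin n → ℤ} (hv : v ∈ S) :
    intVec v ∈ coneOf S :=
  ⟨Pi.single v 1, fun w => by by_cases h : w = v <;> simp [h], by
    rw [Finset.sum_eq_single_of_mem v hv fun w _ hw => by simp [hw]]; simp⟩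

lemma add_mem_coneOf {S : Finset (Fin n → ℤ)} {x y : V n}
    (hx : x ∈ coneOf S) (hy : y ∈ coneOf S) : x + y ∈ coneOf S := by
  obtain ⟨a, ha, rfl⟩ := hx
  obtain ⟨b, hb, rfl⟩ := hy
  exact ⟨a + b, fun v => add_nonneg (ha v) (hb v), by simp [add_smul, Finset.sum_add_distrib]⟩

lemma smul_mem_coneOf {S : Finset (Fin n → ℤ)} {x : V n} {c : ℝ}
    (hc : 0 ≤ c) (hx : x ∈ coneOf S) : c • x ∈ coneOf S := by
  obtain ⟨a, ha, rfl⟩ := hx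
  exact ⟨c • a, fun v => mul_nonneg hc (ha v), by simp [Finset.smul_sum, smul_smul]⟩

lemma sum_smul_mem_coneOf {S : Finset (Fin n → ℤ)} {ι : Type*} (s : Finset ι)
    {w : ι → ℝ} {g : ι → V n} (hw : ∀ i ∈ s, 0 ≤ w i) (hg : ∀ i ∈ s, g i ∈ coneOf S) :
    ∑ i ∈ s, w i • g i ∈ coneOf S := by
  induction s using Finset.induction_on with
  | empty => simpa using zero_mem_coneOf S
  | insert a s ha ih =>
    rw [Finset.sum_insert ha]
    exact add_mem_coneOf (smul_mem_coneOf (hw a (s.mem_insert_self a)) (hg a (s.mem_insert_self a)))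
      (ih (fun i hi => hw i (Finset.mem_insert_of_mem hi))
        (fun i hi => hg i (Finset.mem_insert_of_mem hi)))

lemma apply_sum_smul_intVec (L : V n →ₗ[ℝ] ℝ) (S : Finset (Fin n → ℤ)) (lam : (Fin n → ℤ) → ℝ) :
    L (∑ v ∈ S, lam v • intVec v) = ∑ v ∈ S, lam v * L (intVec v) := by
  simp only [map_sum, map_smul, smul_eq_mul]

lemma apply_nonneg_of_mem_coneOf {S : Finset (Fin n → ℤ)} {L : V n →ₗ[ℝ] ℝ}
    (hL : ∀ v ∈ S, 0 ≤ L (intVec v)) {x : V n} (hx : x ∈ coneOf S) : 0 ≤ L x := by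
  obtain ⟨lam, hlam, rfl⟩ := hx
  rw [apply_sum_smul_intVec]
  exact Finset.sum_nonneg fun v hv => mul_nonneg (hlam v) (hL v hv)

lemma coeff_eq_zero_of_apply_eq_zero {S : Finset (Fin n → ℤ)} {L : V n →ₗ[ℝ] ℝ}
    (hL : ∀ v ∈ S, 0 ≤ L (intVec v)) {lam : (Fin n → ℤ) → ℝ} (hlam : ∀ v, 0 ≤ lam v)
    (h : L (∑ v ∈ S, lam v • intVec v) = 0) {v : Fin n → ℤ} (hv : v ∈ S)
    (hpos : 0 < L (intVec v)) : lam v = 0 := by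
  rw [apply_sum_smul_intVec, Finset.sum_eq_zero_iff_of_nonneg
    fun w hw => mul_nonneg (hlam w) (hL w hw)] at h
  exact (mul_eq_zero.1 (h v hv)).resolve_right hpos.ne'

lemma zero_notMem_convexHull {S : Finset (Fin n → ℤ)} (hsc : StronglyConvex (coneOf S)) :
    (0 : V n) ∉ convexHull ℝ (↑((S.filter fun v => intVec v ≠ 0).image intVec) : Set (V n)) := by
  set T := (S.filter fun v => intVec v ≠ 0).image intVec
  have hT : ∀ y ∈ T, y ∈ coneOf S ∧ y ≠ 0 := by
    intro y hy
    obtain ⟨v, hv, rfl⟩ := Finset.mem_image.1 hy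
    exact ⟨intVec_mem_coneOf (Finset.mem_filter.1 hv).1, (Finset.mem_filter.1 hv).2⟩
  rw [Finset.convexHull_eq]
  rintro ⟨w, hw0, hw1, hw⟩
  rw [Finset.centerMass_eq_of_sum_1 _ _ hw1] at hw
  obtain ⟨u, hu, hwu⟩ := Finset.exists_ne_zero_of_sum_ne_zero (hw1.trans_ne one_ne_zero)
  -- `w u • u` and its negative, the sum of the other terms, both lie in the cone
  have hneg : -(w u • u) ∈ coneOf S := by
    rw [← Finset.add_sum_erase _ _ hu, id, add_eq_zero_iff_eq_neg'] at hw
    rw [← hw]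
    exact sum_smul_mem_coneOf _ (fun y hy => hw0 y (Finset.mem_of_mem_erase hy))
      fun y hy => (hT y (Finset.mem_of_mem_erase hy)).1
  have h0 : w u • u ∈ coneOf S ∩ -coneOf S :=
    ⟨smul_mem_coneOf (hw0 u hu) (hT u hu).1, hneg⟩
  rw [hsc, Set.mem_singleton_iff, smul_eq_zero] at h0
  exact h0.elim hwu (hT u hu).2

lemma exists_pos_on_generators {S : Finset (Fin n → ℤ)} (hsc : StronglyConvex (coneOf S)) :
    ∃ L : V n →ₗ[ℝ] ℝ, ∀ v ∈ S, intVec v ≠ 0 → 0 < L (intVec v) := by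
  obtain ⟨g, u, hg0, hgK⟩ := geometric_hahn_banach_point_closed (convex_convexHull ℝ _)
    ((Finset.finite_toSet _).isClosed_convexHull ℝ) (zero_notMem_convexHull hsc)
  refine ⟨g.toLinearMap, fun v hv hv0 => lt_trans (by simpa using hg0) (hgK _ ?_)⟩
  exact subset_convexHull ℝ _ (Finset.mem_image_of_mem _ (Finset.mem_filter.2 ⟨hv, hv0⟩))

lemma zero_isFaceOf {σ : Set (V n)} (hrat : IsRationalCone σ) (hsc : StronglyConvex σ) :
    IsFaceOf {0} σ := by
  obtain ⟨S, rfl⟩ := hrat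
  obtain ⟨L, hL⟩ := exists_pos_on_generators hsc
  have hL0 : ∀ v ∈ S, 0 ≤ L (intVec v) := fun v hv => by
    by_cases h : intVec v = 0
    · simp [h]
    · exact (hL v hv h).le
  refine ⟨L, fun x hx => apply_nonneg_of_mem_coneOf hL0 hx, ?_⟩
  ext x
  refine ⟨?_, fun ⟨⟨lam, hlam, hx⟩, hLx⟩ => ?_⟩
  · rintro rfl
    exact ⟨zero_mem_coneOf S, map_zero L⟩
  · subst hx
    refine Finset.sum_eq_zero fun v hv => ?_
    by_cases h : intVec v = 0
    · simp [h]
    · simp [coeff_eq_zero_of_apply_eq_zero hL0 hlam hLx hv (hL v hv h)]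

lemma isFaceOf_refl (σ : Set (V n)) : IsFaceOf σ σ :=
  ⟨0, fun _ _ => le_rfl, by simp⟩

lemma IsFaceOf.trans {σ τ ρ : Set (V n)} (hρ : IsFaceOf ρ τ) (hτ : IsFaceOf τ σ)
    (hrat : IsRationalCone σ) : IsFaceOf ρ σ := by
  obtain ⟨S, rfl⟩ := hrat
  obtain ⟨ℓ₁, h₁, rfl⟩ := hτ
  obtain ⟨ℓ₂, h₂, rfl⟩ := hρ
  -- for `N` large, `ℓ₂ + N ℓ₁` is positive on the generators outside `ker ℓ₁`
  obtain ⟨N, hN⟩ := (S.image fun v => (1 - ℓ₂ (intVec v)) / ℓ₁ (intVec v)).exists_le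
  set L := ℓ₂ + N • ℓ₁
  have hpos : ∀ v ∈ S, 0 < ℓ₁ (intVec v) → 0 < L (intVec v) := fun v hv h => by
    have := (div_le_iff₀ h).1 (hN _ (Finset.mem_image_of_mem _ hv))
    simp only [L, LinearMap.add_apply, LinearMap.smul_apply, smul_eq_mul]
    linarith
  have hL : ∀ v ∈ S, 0 ≤ L (intVec v) := fun v hv => by
    rcases (h₁ _ (intVec_mem_coneOf hv)).lt_or_eq with h | h
    · exact (hpos v hv h).le
    · simpa [L, ← h] using h₂ _ ⟨intVec_mem_coneOf hv, h.symm⟩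
  refine ⟨L, fun x hx => apply_nonneg_of_mem_coneOf hL hx, ?_⟩
  ext x
  refine ⟨fun ⟨⟨hx, h1⟩, h2⟩ => ⟨hx, by simp [L, h1.out, h2.out]⟩, fun ⟨⟨lam, hlam, hx⟩, hLx⟩ => ?_⟩
  subst hx
  have h1 : ℓ₁ (∑ v ∈ S, lam v • intVec v) = 0 := by
    rw [apply_sum_smul_intVec]
    refine Finset.sum_eq_zero fun v hv => ?_
    rcases (h₁ _ (intVec_mem_coneOf hv)).lt_or_eq with h | h
    · rw [coeff_eq_zero_of_apply_eq_zero hL hlam hLx hv (hpos v hv h), zero_mul]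
    · rw [← h, mul_zero]
  exact ⟨⟨⟨lam, hlam, rfl⟩, h1⟩, by simpa [L, h1] using hLx⟩

end Cones

section Graphs
variable {n : ℕ} {f : V n → ℝ}

lemma mem_graph_iff {σ : Set (V n)} {y : V (n + 1)} :
    y ∈ graphMap f '' σ ↔ projL n y ∈ σ ∧ lastL n y = f (projL n y) := by
  refine ⟨?_, fun ⟨h₁, h₂⟩ => ⟨projL n y, h₁, ?_⟩⟩
  · rintro ⟨x, hx, rfl⟩
    simpa using hx
  · exact eq_of_projL_lastL (by simp) (by simp [h₂])

lemma mem_upCone_iff {δ : Set (V n)} {y : V (n + 1)} :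
    y ∈ upCone f δ ↔ projL n y ∈ δ ∧ f (projL n y) ≤ lastL n y := by
  refine ⟨?_, fun ⟨h₁, h₂⟩ => ⟨projL n y, h₁, lastL n y - f (projL n y), by linarith, ?_⟩⟩
  · rintro ⟨x, hx, t, ht, rfl⟩
    simpa using ⟨hx, ht⟩
  · exact eq_of_projL_lastL (by simp) (by simp)

lemma upCone_eq_graph_add_specialRay (δ : Set (V n)) :
    upCone f δ = graphMap f '' δ + specialRay n := by
  ext y
  simp only [upCone, specialRay, Set.mem_add, Set.mem_image]
  constructor
  · rintro ⟨x, hx, t, ht, rfl⟩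
    exact ⟨_, ⟨x, hx, rfl⟩, _, ⟨t, ht, rfl⟩, rfl⟩
  · rintro ⟨_, ⟨x, hx, rfl⟩, _, ⟨t, ht, rfl⟩, rfl⟩
    exact ⟨x, hx, t, ht, rfl⟩

lemma graph_subset_upCone (σ : Set (V n)) : graphMap f '' σ ⊆ upCone f σ := fun y hy => by
  rw [mem_graph_iff] at hy
  exact mem_upCone_iff.2 ⟨hy.1, hy.2.ge⟩

lemma upCone_mono {δ δ' : Set (V n)} (h : δ ⊆ δ') : upCone f δ ⊆ upCone f δ' :=
  fun _ hy => mem_upCone_iff.2 ⟨h (mem_upCone_iff.1 hy).1, (mem_upCone_iff.1 hy).2⟩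

lemma graph_subset_graph_iff {σ σ' : Set (V n)} :
    graphMap f '' σ ⊆ graphMap f '' σ' ↔ σ ⊆ σ' :=
  Set.image_subset_image_iff (graphMap_injective f)

lemma graph_injective : Function.Injective fun σ : Set (V n) => graphMap f '' σ :=
  Set.image_injective.2 (graphMap_injective f)

lemma graph_subset_upCone_iff {σ δ : Set (V n)} :
    graphMap f '' σ ⊆ upCone f δ ↔ σ ⊆ δ :=
  ⟨fun h x hx => by simpa using (mem_upCone_iff.1 (h ⟨x, hx, rfl⟩)).1,
    fun h => (graph_subset_upCone σ).trans (upCone_mono h)⟩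

lemma graphMap_zero (hf0 : f 0 = 0) : graphMap f 0 = 0 :=
  eq_of_projL_lastL (by simp) (by simp [hf0])

lemma specialRay_eq_upCone (hf0 : f 0 = 0) : specialRay n = upCone f {0} := by
  rw [upCone_eq_graph_add_specialRay, Set.image_singleton, graphMap_zero hf0, Set.singleton_add]
  simp

lemma eVecR_mem_upCone {δ : Set (V n)} (h0 : (0 : V n) ∈ δ) (hf0 : f 0 = 0) :
    eVecR n ∈ upCone f δ :=
  mem_upCone_iff.2 ⟨by simpa using h0, by simp [hf0]⟩

lemma specialRay_subset_upCone {δ : Set (V n)} (h0 : (0 : V n) ∈ δ) (hf0 : f 0 = 0) :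
    specialRay n ⊆ upCone f δ :=
  specialRay_eq_upCone hf0 ▸ upCone_mono (Set.singleton_subset_iff.2 h0)

lemma eVecR_notMem_graph {σ : Set (V n)} (hf0 : f 0 = 0) : eVecR n ∉ graphMap f '' σ :=
  fun h => by simpa [hf0] using (mem_graph_iff.1 h).2

lemma not_upCone_subset_graph {σ δ : Set (V n)} (h0 : (0 : V n) ∈ δ) (hf0 : f 0 = 0) :
    ¬ upCone f δ ⊆ graphMap f '' σ :=
  fun h => eVecR_notMem_graph hf0 (h (eVecR_mem_upCone h0 hf0))

lemma graph_ne_specialRay {ρ : Set (V n)} (hf0 : f 0 = 0) : graphMap f '' ρ ≠ specialRay n :=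
  fun h => not_upCone_subset_graph (δ := {0}) rfl hf0 (by rw [← specialRay_eq_upCone hf0, h])

lemma graph_inter_graph (σ σ' : Set (V n)) :
    graphMap f '' σ ∩ graphMap f '' σ' = graphMap f '' (σ ∩ σ') :=
  (Set.image_inter (graphMap_injective f)).symm

lemma graph_inter_upCone (σ δ : Set (V n)) :
    graphMap f '' σ ∩ upCone f δ = graphMap f '' (σ ∩ δ) := by
  ext y
  simp only [Set.mem_inter_iff, mem_graph_iff, mem_upCone_iff]
  exact ⟨fun ⟨⟨h₁, h₂⟩, h₃, _⟩ => ⟨⟨h₁, h₃⟩, h₂⟩, fun ⟨⟨h₁, h₃⟩, h₂⟩ => ⟨⟨h₁, h₂⟩, h₃, h₂.ge⟩⟩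

lemma upCone_inter_upCone (δ δ' : Set (V n)) :
    upCone f δ ∩ upCone f δ' = upCone f (δ ∩ δ') := by
  ext y
  simp only [Set.mem_inter_iff, mem_upCone_iff]
  tauto

lemma span_specialRay : Submodule.span ℝ (specialRay n) = Submodule.span ℝ {eVecR n} := by
  refine le_antisymm (Submodule.span_le.2 ?_) (Submodule.span_mono ?_)
  · rintro _ ⟨t, -, rfl⟩
    exact Submodule.smul_mem _ t (Submodule.mem_span_singleton_self _)
  · exact Set.singleton_subset_iff.2 ⟨1, zero_le_one, (one_smul ℝ _).symm⟩

lemma dimC_specialRay : dimC (specialRay n) = 1 := by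
  rw [dimC, span_specialRay, finrank_span_singleton eVecR_ne_zero]

lemma span_graph {σ : Set (V n)} {ℓ : Fin n → ℤ} (hfl : Set.EqOn f (pairR ℓ) σ) :
    Submodule.span ℝ (graphMap f '' σ) = (Submodule.span ℝ σ).map (graphL ℓ) := by
  rw [(graphMap_eqOn hfl).image_eq, Submodule.span_image]

lemma dimC_graph {σ : Set (V n)} {ℓ : Fin n → ℤ} (hfl : Set.EqOn f (pairR ℓ) σ) :
    dimC (graphMap f '' σ) = dimC σ := by
  rw [dimC, dimC, span_graph hfl]
  exact ((Submodule.span ℝ σ).equivMapOfInjective _ (graphL_injective ℓ)).symm.finrank_eq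

lemma dimC_upCone {δ : Set (V n)} {ℓ : Fin n → ℤ} (hfl : Set.EqOn f (pairR ℓ) δ)
    (h0 : (0 : V n) ∈ δ) : dimC (upCone f δ) = dimC δ + 1 := by
  have hf0 : f 0 = 0 := by simpa [pairR] using hfl h0
  have he : eVecR n ∉ Submodule.span ℝ (graphMap f '' δ) := by
    rw [span_graph hfl]
    exact fun h => eVecR_notMem_range_graphL ℓ (LinearMap.map_le_range h)
  have h0s : (0 : V (n + 1)) ∈ specialRay n := ⟨0, le_rfl, (zero_smul ℝ _).symm⟩
  have h0g : (0 : V (n + 1)) ∈ graphMap f '' δ := ⟨0, h0, graphMap_zero hf0⟩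
  rw [dimC, upCone_eq_graph_add_specialRay, Submodule.span_add_of_zero_mem h0g h0s,
    span_specialRay, Submodule.finrank_sup_span_singleton he, ← dimC, dimC_graph hfl]

lemma eq_zero_of_dimC_eq_zero {σ : Set (V n)} (h0 : (0 : V n) ∈ σ) (hd : dimC σ = 0) :
    σ = {0} := by
  have hb : Submodule.span ℝ σ = ⊥ := Submodule.finrank_eq_zero.1 hd
  refine Set.eq_singleton_iff_unique_mem.2 ⟨h0, fun x hx => ?_⟩
  simpa [hb] using Submodule.subset_span (R := ℝ) hx

end Graphs

structure IsSubfan {n : ℕ} (Δ F : Finset (Set (V n))) : Prop where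
  nonempty : Δ.Nonempty
  subset : Δ ⊆ F
  faces_mem : ∀ δ ∈ Δ, ∀ δ', IsFaceOf δ' δ → δ' ∈ Δ

section TMfan
variable {n : ℕ} {F Δ : Finset (Set (V n))} {f : V n → ℝ}

lemma IsSubfan.zero_mem (hF : IsFan F) (hΔ : IsSubfan Δ F) : ({0} : Set (V n)) ∈ Δ := by
  obtain ⟨δ, hδ⟩ := hΔ.nonempty
  exact hΔ.faces_mem δ hδ _
    (zero_isFaceOf (hF.rat δ (hΔ.subset hδ)) (hF.convex δ (hΔ.subset hδ)))

lemma ConewiseLinear.map_zero (hF : IsFan F) (hf : ConewiseLinear F f) : f 0 = 0 := by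
  obtain ⟨σ, hσ⟩ := hF.nonempty
  obtain ⟨ℓ, hℓ⟩ := hf σ hσ
  simpa [pairR] using hℓ 0 (hF.rat σ hσ).zero_mem

lemma mem_TMfan_iff {ξ : Set (V (n + 1))} :
    ξ ∈ TMfan F f Δ ↔ (∃ σ ∈ F, graphMap f '' σ = ξ) ∨ ∃ δ ∈ Δ, upCone f δ = ξ := by
  simp only [TMfan, Finset.mem_union, Finset.mem_image]

lemma graph_mem_TMfan {σ : Set (V n)} (hσ : σ ∈ F) : graphMap f '' σ ∈ TMfan F f Δ :=
  mem_TMfan_iff.2 (Or.inl ⟨σ, hσ, rfl⟩)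

lemma upCone_mem_TMfan {δ : Set (V n)} (hδ : δ ∈ Δ) : upCone f δ ∈ TMfan F f Δ :=
  mem_TMfan_iff.2 (Or.inr ⟨δ, hδ, rfl⟩)

end TMfan

section Rationality
variable {n : ℕ} {f : V n → ℝ}

lemma image_coneOf {m : ℕ} (A : V n →ₗ[ℝ] V m) {g : (Fin n → ℤ) → Fin m → ℤ}
    {g' : (Fin m → ℤ) → Fin n → ℤ} (hA : ∀ v, A (intVec v) = intVec (g v))
    (hg : Function.LeftInverse g' g) (S : Finset (Fin n → ℤ)) :
    A '' coneOf S = coneOf (S.image g) := by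
  ext y
  simp only [coneOf, Set.mem_image, Finset.sum_image hg.injective.injOn]
  constructor
  · rintro ⟨_, ⟨lam, hlam, rfl⟩, rfl⟩
    exact ⟨lam ∘ g', fun _ => hlam _, by simp [hA, hg _]⟩
  · rintro ⟨lam, hlam, rfl⟩
    exact ⟨_, ⟨lam ∘ g, fun _ => hlam _, rfl⟩, by simp [hA]⟩

lemma coneOf_insert {S : Finset (Fin n → ℤ)} {w : Fin n → ℤ} (hw : w ∉ S) :
    coneOf (insert w S) = coneOf S + coneOf {w} := by
  ext x
  constructor
  · rintro ⟨lam, hlam, rfl⟩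
    rw [Finset.sum_insert hw]
    exact ⟨_, ⟨lam, hlam, rfl⟩, _, ⟨lam, hlam, (Finset.sum_singleton _ _).symm⟩, add_comm _ _⟩
  · rintro ⟨_, ⟨a, ha, rfl⟩, _, ⟨b, hb, rfl⟩, rfl⟩
    refine ⟨Function.update a w (b w), fun v => ?_, ?_⟩
    · by_cases h : v = w
      · subst h; simpa using hb v
      · simpa [h] using ha v
    · have ha' : ∑ v ∈ S, Function.update a w (b w) v • intVec v = ∑ v ∈ S, a v • intVec v :=
        Finset.sum_congr rfl fun v hv => by rw [Function.update_of_ne (ne_of_mem_of_not_mem hv hw)]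
      rw [Finset.sum_insert hw, ha', Finset.sum_singleton, Function.update_self, add_comm]

lemma specialRay_eq_coneOf : specialRay n = coneOf {Fin.snoc (0 : Fin n → ℤ) 1} := by
  ext y
  constructor
  · rintro ⟨t, ht, rfl⟩
    exact ⟨fun _ => t, fun _ => ht, by simp [intVec_snoc_zero_one]⟩
  · rintro ⟨lam, hlam, rfl⟩
    exact ⟨lam (Fin.snoc 0 1), hlam _, by simp [intVec_snoc_zero_one]⟩

lemma graph_coneOf {S : Finset (Fin n → ℤ)} {ℓ : Fin n → ℤ}
    (hfl : Set.EqOn f (pairR ℓ) (coneOf S)) :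
    graphMap f '' coneOf S = coneOf (S.image fun v => Fin.snoc v (pairZ ℓ v)) := by
  rw [(graphMap_eqOn hfl).image_eq]
  exact image_coneOf _ (graphL_intVec ℓ) (g' := Fin.init) (fun v => Fin.init_snoc _ _) S

lemma snoc_zero_one_notMem_image (ℓ : Fin n → ℤ) (S : Finset (Fin n → ℤ)) :
    (Fin.snoc (0 : Fin n → ℤ) 1 : Fin (n + 1) → ℤ) ∉ S.image fun v => Fin.snoc v (pairZ ℓ v) := by
  simp only [Finset.mem_image, Fin.snoc_inj, not_exists, not_and]
  rintro v - rfl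
  simp [pairZ]

lemma IsRationalCone.graph {σ : Set (V n)} (hσ : IsRationalCone σ) {ℓ : Fin n → ℤ}
    (hfl : Set.EqOn f (pairR ℓ) σ) : IsRationalCone (graphMap f '' σ) := by
  obtain ⟨S, rfl⟩ := isRationalCone_iff.1 hσ
  exact ⟨_, graph_coneOf hfl⟩

lemma IsRationalCone.upCone {δ : Set (V n)} (hδ : IsRationalCone δ) {ℓ : Fin n → ℤ}
    (hfl : Set.EqOn f (pairR ℓ) δ) : IsRationalCone (upCone f δ) := by
  obtain ⟨S, rfl⟩ := isRationalCone_iff.1 hδ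
  refine ⟨insert (Fin.snoc 0 1) (S.image fun v => Fin.snoc v (pairZ ℓ v)), ?_⟩
  rw [upCone_eq_graph_add_specialRay, graph_coneOf hfl, specialRay_eq_coneOf]
  exact (coneOf_insert (snoc_zero_one_notMem_image ℓ S)).symm

end Rationality

section Faces
variable {n : ℕ} {f : V n → ℝ}

lemma StronglyConvex.mono {m : ℕ} {s t : Set (V m)} (ht : StronglyConvex t) (hst : s ⊆ t)
    (hs : 0 ∈ s) : StronglyConvex s :=
  Set.Subset.antisymm (fun _ hx => ht ▸ ⟨hst hx.1, hst hx.2⟩)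
    (Set.singleton_subset_iff.2 ⟨hs, by simpa using hs⟩)

lemma zero_mem_upCone {δ : Set (V n)} (h0 : (0 : V n) ∈ δ) (hf0 : f 0 = 0) :
    (0 : V (n + 1)) ∈ upCone f δ :=
  mem_upCone_iff.2 ⟨by simpa using h0, by simp [hf0]⟩

lemma StronglyConvex.upCone {δ : Set (V n)} (hsc : StronglyConvex δ) (h0 : (0 : V n) ∈ δ)
    (hf0 : f 0 = 0) : StronglyConvex (upCone f δ) := by
  refine Set.Subset.antisymm (fun y ⟨h₁, h₂⟩ => ?_)
    (Set.singleton_subset_iff.2 ⟨zero_mem_upCone h0 hf0, by simpa using zero_mem_upCone h0 hf0⟩)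
  rw [Set.mem_neg, mem_upCone_iff, map_neg, map_neg] at h₂
  rw [mem_upCone_iff] at h₁
  have hp : projL n y = 0 := by
    have : projL n y ∈ δ ∩ -δ := ⟨h₁.1, by simpa using h₂.1⟩
    rwa [hsc] at this
  rw [hp, hf0] at h₁
  rw [hp, neg_zero, hf0] at h₂
  exact eq_of_projL_lastL (by simp [hp]) (by rw [map_zero]; linarith [h₁.2, h₂.2])

lemma IsFaceOf.graph {τ σ : Set (V n)} (h : IsFaceOf τ σ) :
    IsFaceOf (graphMap f '' τ) (graphMap f '' σ) := by
  obtain ⟨ℓ₀, hpos, rfl⟩ := h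
  refine ⟨ℓ₀ ∘ₗ projL n, fun y hy => hpos _ (mem_graph_iff.1 hy).1, ?_⟩
  ext y
  simp only [mem_graph_iff, Set.mem_inter_iff, LinearMap.comp_apply]
  tauto

lemma IsFaceOf.upCone {τ δ : Set (V n)} (h : IsFaceOf τ δ) :
    IsFaceOf (upCone f τ) (upCone f δ) := by
  obtain ⟨ℓ₀, hpos, rfl⟩ := h
  refine ⟨ℓ₀ ∘ₗ projL n, fun y hy => hpos _ (mem_upCone_iff.1 hy).1, ?_⟩
  ext y
  simp only [mem_upCone_iff, Set.mem_inter_iff, LinearMap.comp_apply]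
  tauto

lemma graph_isFaceOf_upCone {δ : Set (V n)} {ℓ : Fin n → ℤ} (hfl : Set.EqOn f (pairR ℓ) δ) :
    IsFaceOf (graphMap f '' δ) (upCone f δ) := by
  have key : ∀ y, projL n y ∈ δ → (lastL n - pairL ℓ ∘ₗ projL n) y = lastL n y - f (projL n y) :=
    fun y hy => by simp [hfl hy]
  refine ⟨lastL n - pairL ℓ ∘ₗ projL n, fun y hy => ?_, ?_⟩
  · rw [mem_upCone_iff] at hy
    rw [key y hy.1]
    linarith [hy.2]
  · ext y
    simp only [mem_graph_iff, mem_upCone_iff, Set.mem_inter_iff]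
    exact ⟨fun ⟨h₁, h₂⟩ => ⟨⟨h₁, h₂.ge⟩, by rw [Set.mem_ofPred_eq, key y h₁, h₂, sub_self]⟩,
      fun ⟨⟨h₁, _⟩, h₂⟩ => ⟨h₁, by rw [Set.mem_ofPred_eq, key y h₁] at h₂; linarith⟩⟩

lemma faces_of_graph {σ : Set (V n)} {ℓ : Fin n → ℤ} (hfl : Set.EqOn f (pairR ℓ) σ)
    {ξ : Set (V (n + 1))} (h : IsFaceOf ξ (graphMap f '' σ)) :
    ∃ τ, IsFaceOf τ σ ∧ graphMap f '' τ = ξ := by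
  obtain ⟨L, hL, rfl⟩ := h
  have hLg : ∀ x ∈ σ, L (graphMap f x) = (L ∘ₗ graphL ℓ) x := fun x hx => by
    rw [LinearMap.comp_apply, graphMap_eqOn hfl hx]
  refine ⟨σ ∩ graphMap f ⁻¹' {y | L y = 0}, ⟨L ∘ₗ graphL ℓ, fun x hx => ?_, ?_⟩,
    Set.image_inter_preimage _ _ _⟩
  · rw [← hLg x hx]
    exact hL _ ⟨x, hx, rfl⟩
  · exact Set.ext fun x => and_congr_right fun hx => by simp [hLg x hx]

lemma eq_graphMap_add_smul (y : V (n + 1)) :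
    y = graphMap f (projL n y) + (lastL n y - f (projL n y)) • eVecR n :=
  eq_of_projL_lastL (by simp) (by simp)

lemma faces_of_upCone {δ : Set (V n)} {ℓ : Fin n → ℤ} (hfl : Set.EqOn f (pairR ℓ) δ)
    (h0 : (0 : V n) ∈ δ) {ξ : Set (V (n + 1))} (h : IsFaceOf ξ (upCone f δ)) :
    (∃ τ, IsFaceOf τ δ ∧ graphMap f '' τ = ξ) ∨ ∃ τ, IsFaceOf τ δ ∧ upCone f τ = ξ := by
  obtain ⟨L, hL, rfl⟩ := h
  have hf0 : f 0 = 0 := by simpa [pairR] using hfl h0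
  set ℓ' := L ∘ₗ graphL ℓ
  have hLg : ∀ x ∈ δ, L (graphMap f x) = ℓ' x := fun x hx => by
    rw [LinearMap.comp_apply, graphMap_eqOn hfl hx]
  have hℓ' : ∀ x ∈ δ, 0 ≤ ℓ' x := fun x hx =>
    hLg x hx ▸ hL _ (graph_subset_upCone δ ⟨x, hx, rfl⟩)
  have hc : 0 ≤ L (eVecR n) := hL _ (eVecR_mem_upCone h0 hf0)
  have hsplit : ∀ y, projL n y ∈ δ →
      L y = ℓ' (projL n y) + (lastL n y - f (projL n y)) * L (eVecR n) := fun y hy => by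
    conv_lhs => rw [eq_graphMap_add_smul (f := f) y]
    rw [map_add, map_smul, hLg _ hy, smul_eq_mul]
  have hτ : IsFaceOf (δ ∩ {x | ℓ' x = 0}) δ := ⟨ℓ', hℓ', rfl⟩
  rcases hc.eq_or_lt with hc | hc
  · refine Or.inr ⟨_, hτ, Set.ext fun y => ?_⟩
    simp only [Set.mem_inter_iff, mem_upCone_iff, Set.mem_ofPred_eq]
    exact ⟨fun ⟨⟨h₁, h₂⟩, h₃⟩ => ⟨⟨h₁, h₃⟩, by rw [hsplit y h₁, h₂, ← hc]; ring⟩,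
      fun ⟨⟨h₁, h₃⟩, h₂⟩ => ⟨⟨h₁, by simpa [hsplit y h₁, ← hc] using h₂⟩, h₃⟩⟩
  · refine Or.inl ⟨_, hτ, Set.ext fun y => ?_⟩
    simp only [Set.mem_inter_iff, mem_upCone_iff, mem_graph_iff, Set.mem_ofPred_eq]
    refine ⟨fun ⟨⟨h₁, h₂⟩, h₃⟩ => ⟨⟨h₁, h₃.ge⟩, by rw [hsplit y h₁, h₂, h₃]; ring⟩,
      fun ⟨⟨h₁, h₃⟩, h₂⟩ => ?_⟩
    rw [hsplit y h₁] at h₂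
    have ht := mul_nonneg (sub_nonneg.2 h₃) hc.le
    have hx := hℓ' _ h₁
    have ht0 := (mul_eq_zero.1 (by linarith : (lastL n y - f (projL n y)) * L (eVecR n) = 0))
    exact ⟨⟨h₁, by linarith⟩, by linarith [ht0.resolve_right hc.ne']⟩

end Faces

section TMfanIsFan
variable {n : ℕ} {F Δ : Finset (Set (V n))} {f : V n → ℝ}

lemma isFaceOf_inter_of_mem_TMfan (hF : IsFan F) (hf : ConewiseLinear F f) (hΔ : IsSubfan Δ F)
    {ξ ζ : Set (V (n + 1))} (hξ : ξ ∈ TMfan F f Δ) (hζ : ζ ∈ TMfan F f Δ) :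
    IsFaceOf (ξ ∩ ζ) ξ := by
  rcases mem_TMfan_iff.1 hξ with ⟨σ, hσ, rfl⟩ | ⟨δ, hδ, rfl⟩ <;>
    rcases mem_TMfan_iff.1 hζ with ⟨σ', hσ', rfl⟩ | ⟨δ', hδ', rfl⟩
  · rw [graph_inter_graph]
    exact (hF.inter_face_left σ hσ σ' hσ').graph
  · rw [graph_inter_upCone]
    exact (hF.inter_face_left σ hσ δ' (hΔ.subset hδ')).graph
  · have hδF := hΔ.subset hδ
    obtain ⟨ℓ, hℓ⟩ := hf δ hδF
    rw [Set.inter_comm, graph_inter_upCone]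
    exact (hF.inter_face_right σ' hσ' δ hδF).graph.trans (graph_isFaceOf_upCone hℓ)
      ((hF.rat δ hδF).upCone hℓ)
  · rw [upCone_inter_upCone]
    exact (hF.inter_face_left δ (hΔ.subset hδ) δ' (hΔ.subset hδ')).upCone

lemma isFan_TMfan (hF : IsFan F) (hf : ConewiseLinear F f) (hΔ : IsSubfan Δ F) :
    IsFan (TMfan F f Δ) where
  nonempty := (hF.nonempty.image _).mono Finset.subset_union_left
  rat ξ hξ := by
    rcases mem_TMfan_iff.1 hξ with ⟨σ, hσ, rfl⟩ | ⟨δ, hδ, rfl⟩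
    · obtain ⟨ℓ, hℓ⟩ := hf σ hσ
      exact (hF.rat σ hσ).graph hℓ
    · obtain ⟨ℓ, hℓ⟩ := hf δ (hΔ.subset hδ)
      exact (hF.rat δ (hΔ.subset hδ)).upCone hℓ
  convex ξ hξ := by
    have hf0 := hf.map_zero hF
    rcases mem_TMfan_iff.1 hξ with ⟨σ, hσ, rfl⟩ | ⟨δ, hδ, rfl⟩
    · have h0 := (hF.rat σ hσ).zero_mem
      exact ((hF.convex σ hσ).upCone h0 hf0).mono (graph_subset_upCone σ)
        ⟨0, h0, graphMap_zero hf0⟩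
    · exact (hF.convex δ (hΔ.subset hδ)).upCone (hF.rat δ (hΔ.subset hδ)).zero_mem hf0
  faces_mem ξ hξ ζ hζ := by
    rcases mem_TMfan_iff.1 hξ with ⟨σ, hσ, rfl⟩ | ⟨δ, hδ, rfl⟩
    · obtain ⟨ℓ, hℓ⟩ := hf σ hσ
      obtain ⟨τ, hτ, rfl⟩ := faces_of_graph hℓ hζ
      exact graph_mem_TMfan (hF.faces_mem σ hσ τ hτ)
    · have hδF := hΔ.subset hδ
      obtain ⟨ℓ, hℓ⟩ := hf δ hδF
      rcases faces_of_upCone hℓ (hF.rat δ hδF).zero_mem hζ with ⟨τ, hτ, rfl⟩ | ⟨τ, hτ, rfl⟩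
      · exact graph_mem_TMfan (hF.faces_mem δ hδF τ hτ)
      · exact upCone_mem_TMfan (hΔ.faces_mem δ hδ τ hτ)
  inter_face_left _ hξ _ hζ := isFaceOf_inter_of_mem_TMfan hF hf hΔ hξ hζ
  inter_face_right ξ hξ ζ hζ := Set.inter_comm ξ ζ ▸ isFaceOf_inter_of_mem_TMfan hF hf hΔ hζ hξ

end TMfanIsFan

section Rays
variable {n : ℕ} {F Δ : Finset (Set (V n))} {f : V n → ℝ}

lemma graph_mem_raysF_TMfan (hf : ConewiseLinear F f) {ρ : Set (V n)} (hρ : ρ ∈ raysF F) :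
    graphMap f '' ρ ∈ raysF (TMfan F f Δ) := by
  obtain ⟨hρF, hρ1⟩ := Finset.mem_filter.1 hρ
  obtain ⟨ℓ, hℓ⟩ := hf ρ hρF
  exact Finset.mem_filter.2 ⟨graph_mem_TMfan hρF, (dimC_graph hℓ).trans hρ1⟩

lemma specialRay_mem_raysF_TMfan (hF : IsFan F) (hf : ConewiseLinear F f) (hΔ : IsSubfan Δ F) :
    specialRay n ∈ raysF (TMfan F f Δ) :=
  Finset.mem_filter.2 ⟨specialRay_eq_upCone (hf.map_zero hF) ▸ upCone_mem_TMfan (hΔ.zero_mem hF),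
    dimC_specialRay⟩

lemma mem_raysF_TMfan_iff (hF : IsFan F) (hf : ConewiseLinear F f) (hΔ : IsSubfan Δ F)
    {ξ : Set (V (n + 1))} :
    ξ ∈ raysF (TMfan F f Δ) ↔ (∃ ρ ∈ raysF F, ξ = graphMap f '' ρ) ∨ ξ = specialRay n := by
  refine ⟨fun hξ => ?_, ?_⟩
  · obtain ⟨hξ, hdim⟩ := Finset.mem_filter.1 hξ
    rcases mem_TMfan_iff.1 hξ with ⟨σ, hσ, rfl⟩ | ⟨δ, hδ, rfl⟩
    · obtain ⟨ℓ, hℓ⟩ := hf σ hσ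
      exact Or.inl ⟨σ, Finset.mem_filter.2 ⟨hσ, (dimC_graph hℓ).symm.trans hdim⟩, rfl⟩
    · have hδF := hΔ.subset hδ
      obtain ⟨ℓ, hℓ⟩ := hf δ hδF
      rw [dimC_upCone hℓ (hF.rat δ hδF).zero_mem, Nat.add_eq_right] at hdim
      rw [eq_zero_of_dimC_eq_zero (hF.rat δ hδF).zero_mem hdim,
        specialRay_eq_upCone (hf.map_zero hF)]
      exact Or.inr rfl
  · rintro (⟨ρ, hρ, rfl⟩ | rfl)
    · exact graph_mem_raysF_TMfan hf hρ
    · exact specialRay_mem_raysF_TMfan hF hf hΔ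

lemma IsPrimitiveGen.graph {ρ : Set (V n)} {ℓ : Fin n → ℤ} (hfl : Set.EqOn f (pairR ℓ) ρ)
    {v : Fin n → ℤ} (hv : IsPrimitiveGen ρ v) :
    IsPrimitiveGen (graphMap f '' ρ) (Fin.snoc v (pairZ ℓ v)) := by
  obtain ⟨hv0, hvρ, hvgen⟩ := hv
  refine ⟨fun h => hv0 (funext fun i => by simpa using congrFun h i.castSucc), ?_, fun w hw => ?_⟩
  · rw [← graphL_intVec, ← graphMap_eqOn hfl hvρ]
    exact ⟨_, hvρ, rfl⟩
  · rw [memLat, span_graph hfl] at hw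
    obtain ⟨z, hz, hzw⟩ := hw
    have hz' : z = intVec (Fin.init w) := by rw [← projL_graphL ℓ z, hzw, projL_intVec]
    obtain ⟨k, hk⟩ := hvgen (Fin.init w) (by rwa [memLat, ← hz'])
    refine ⟨k, intVec_injective ?_⟩
    rw [← hzw, hz', hk, intVec_smul, map_smul, graphL_intVec, intVec_smul]

lemma exists_isPrimitiveGen_graph (hf : ConewiseLinear F f) {ρ : Set (V n)} (hρ : ρ ∈ F)
    {v : Fin n → ℤ} (hv : IsPrimitiveGen ρ v) :
    ∃ m : ℤ, (m : ℝ) = f (intVec v) ∧ IsPrimitiveGen (graphMap f '' ρ) (Fin.snoc v m) := by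
  obtain ⟨ℓ, hℓ⟩ := hf ρ hρ
  exact ⟨pairZ ℓ v, by rw [hℓ _ hv.2.1, pairR_intVec], hv.graph hℓ⟩

lemma isPrimitiveGen_specialRay :
    IsPrimitiveGen (specialRay n) (Fin.snoc (0 : Fin n → ℤ) 1) := by
  refine ⟨fun h => one_ne_zero (α := ℤ) (by simpa using congrFun h (Fin.last n)), ?_,
    fun w hw => ?_⟩
  · rw [intVec_snoc_zero_one]
    exact ⟨1, zero_le_one, (one_smul ℝ _).symm⟩
  · rw [memLat, span_specialRay, Submodule.mem_span_singleton] at hw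
    obtain ⟨c, hc⟩ := hw
    have hinit : Fin.init w = 0 := funext fun i => by
      simpa [intVec, eVecR, Fin.init] using (congrFun hc i.castSucc).symm
    refine ⟨w (Fin.last n), ?_⟩
    conv_lhs => rw [← Fin.snoc_init_self w, hinit]
    funext i
    refine Fin.lastCases ?_ (fun j => ?_) i <;> simp

lemma IsPrimitiveGen.unique {m : ℕ} {r : Set (V m)} (hsc : StronglyConvex r)
    {v w : Fin m → ℤ} (hv : IsPrimitiveGen r v) (hw : IsPrimitiveGen r w) : v = w := by
  obtain ⟨k, hk⟩ := hv.2.2 w (Submodule.subset_span hw.2.1)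
  obtain ⟨k', hk'⟩ := hw.2.2 v (Submodule.subset_span hv.2.1)
  have hkk : k' * k = 1 := by
    have : (k' * k - 1) • v = 0 := by rw [sub_smul, mul_smul, ← hk, ← hk', one_smul, sub_self]
    exact sub_eq_zero.1 ((smul_eq_zero.1 this).resolve_right hv.1)
  rcases Int.eq_one_or_neg_one_of_mul_eq_one (mul_comm k' k ▸ hkk) with hk1 | hk1
  · rw [hk, hk1, one_smul]
  · -- `w = -v` would put both `±intVec v` in the strongly convex cone `r`
    have hwr := hw.2.1
    rw [hk, hk1, neg_one_smul, intVec_neg] at hwr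
    have hneg : intVec v ∈ r ∩ -r := ⟨hv.2.1, hwr⟩
    rw [hsc, Set.mem_singleton_iff, ← intVec_zero] at hneg
    exact absurd (intVec_injective hneg) hv.1

end Rays

section Simplicial
variable {n : ℕ} {F Δ : Finset (Set (V n))} {f : V n → ℝ}

lemma isSimplicial_iff {m : ℕ} {G : Finset (Set (V m))} :
    IsSimplicial G ↔
      ∀ σ ∈ G, (raysOfCone G σ).card = dimC σ ∧ σ = ∑ ρ ∈ raysOfCone G σ, ρ := by
  have hsum : ∀ s : Finset (Set (V m)),
      {x | ∃ y : Set (V m) → V m, (∀ ρ ∈ s, y ρ ∈ ρ) ∧ x = ∑ ρ ∈ s, y ρ} = ∑ ρ ∈ s, ρ :=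
    fun s => Set.ext fun x => by
      rw [Set.mem_finsetSum]
      exact ⟨fun ⟨y, hy, hx⟩ => ⟨y, fun h => hy _ h, hx.symm⟩,
        fun ⟨y, hy, hx⟩ => ⟨y, fun _ h => hy h, hx.symm⟩⟩
  simp only [IsSimplicial, hsum]

lemma raysOfCone_graph (hF : IsFan F) (hf : ConewiseLinear F f) (hΔ : IsSubfan Δ F)
    (σ : Set (V n)) :
    raysOfCone (TMfan F f Δ) (graphMap f '' σ) = (raysOfCone F σ).image (graphMap f '' ·) := by
  have hf0 := hf.map_zero hF
  ext r
  simp only [raysOfCone, Finset.mem_filter, Finset.mem_image]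
  constructor
  · rintro ⟨hr, hsub⟩
    rcases (mem_raysF_TMfan_iff hF hf hΔ).1 hr with ⟨ρ, hρ, rfl⟩ | rfl
    · exact ⟨ρ, ⟨hρ, graph_subset_graph_iff.1 hsub⟩, rfl⟩
    · exact absurd hsub (specialRay_eq_upCone hf0 ▸ not_upCone_subset_graph rfl hf0)
  · rintro ⟨ρ, ⟨hρ, hsub⟩, rfl⟩
    exact ⟨graph_mem_raysF_TMfan hf hρ, graph_subset_graph_iff.2 hsub⟩

lemma raysOfCone_upCone (hF : IsFan F) (hf : ConewiseLinear F f) (hΔ : IsSubfan Δ F)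
    {δ : Set (V n)} (hδ : δ ∈ Δ) :
    raysOfCone (TMfan F f Δ) (upCone f δ)
      = insert (specialRay n) ((raysOfCone F δ).image (graphMap f '' ·)) := by
  have hf0 := hf.map_zero hF
  ext r
  simp only [raysOfCone, Finset.mem_filter, Finset.mem_insert, Finset.mem_image]
  constructor
  · rintro ⟨hr, hsub⟩
    rcases (mem_raysF_TMfan_iff hF hf hΔ).1 hr with ⟨ρ, hρ, rfl⟩ | rfl
    · exact Or.inr ⟨ρ, ⟨hρ, graph_subset_upCone_iff.1 hsub⟩, rfl⟩
    · exact Or.inl rfl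
  · rintro (rfl | ⟨ρ, ⟨hρ, hsub⟩, rfl⟩)
    · exact ⟨specialRay_mem_raysF_TMfan hF hf hΔ,
        specialRay_subset_upCone (hF.rat δ (hΔ.subset hδ)).zero_mem hf0⟩
    · exact ⟨graph_mem_raysF_TMfan hf hρ, graph_subset_upCone_iff.2 hsub⟩

lemma graph_eq_sum {σ : Set (V n)} {ℓ : Fin n → ℤ} (hfl : Set.EqOn f (pairR ℓ) σ)
    {R : Finset (Set (V n))} (hR : ∀ ρ ∈ R, ρ ⊆ σ) (hσ : σ = ∑ ρ ∈ R, ρ) :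
    graphMap f '' σ = ∑ r ∈ R.image (graphMap f '' ·), r := by
  rw [Finset.sum_image graph_injective.injOn, (graphMap_eqOn hfl).image_eq]
  conv_lhs => rw [hσ]
  rw [Set.image_finsetSum (graphL ℓ)]
  exact Finset.sum_congr rfl fun ρ hρ => ((graphMap_eqOn hfl).mono (hR ρ hρ)).image_eq.symm

lemma isSimplicial_TMfan (hF : IsFan F) (hf : ConewiseLinear F f) (hΔ : IsSubfan Δ F)
    (hs : IsSimplicial F) : IsSimplicial (TMfan F f Δ) := by
  rw [isSimplicial_iff] at hs ⊢
  have hR : ∀ σ, ∀ ρ ∈ raysOfCone F σ, ρ ⊆ σ := fun σ ρ hρ => (Finset.mem_filter.1 hρ).2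
  intro ξ hξ
  rcases mem_TMfan_iff.1 hξ with ⟨σ, hσ, rfl⟩ | ⟨δ, hδ, rfl⟩
  · obtain ⟨ℓ, hℓ⟩ := hf σ hσ
    obtain ⟨hcard, hsum⟩ := hs σ hσ
    rw [raysOfCone_graph hF hf hΔ, Finset.card_image_of_injective _ graph_injective, hcard,
      dimC_graph hℓ]
    exact ⟨rfl, graph_eq_sum hℓ (hR σ) hsum⟩
  · have hδF := hΔ.subset hδ
    obtain ⟨ℓ, hℓ⟩ := hf δ hδF
    obtain ⟨hcard, hsum⟩ := hs δ hδF
    have hnot : specialRay n ∉ (raysOfCone F δ).image (graphMap f '' ·) := by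
      simpa using fun ρ _ => graph_ne_specialRay (hf.map_zero hF)
    rw [raysOfCone_upCone hF hf hΔ hδ, Finset.card_insert_of_notMem hnot,
      Finset.card_image_of_injective _ graph_injective, hcard,
      dimC_upCone hℓ (hF.rat δ hδF).zero_mem,
      Finset.sum_insert hnot, upCone_eq_graph_add_specialRay, graph_eq_sum hℓ (hR δ) hsum]
    exact ⟨rfl, add_comm _ _⟩

end Simplicial

section Chow
variable {n : ℕ} {F Δ : Finset (Set (V n))} {f : V n → ℝ}

def graphRay (hf : ConewiseLinear F f) (ρ : RayT F) : RayT (TMfan F f Δ) :=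
  ⟨graphMap f '' ρ.1, graph_mem_raysF_TMfan hf ρ.2⟩

def specialRayT (hF : IsFan F) (hf : ConewiseLinear F f) (hΔ : IsSubfan Δ F) :
    RayT (TMfan F f Δ) :=
  ⟨specialRay n, specialRay_mem_raysF_TMfan hF hf hΔ⟩

lemma graphRay_injective (hf : ConewiseLinear F f) :
    Function.Injective (graphRay (Δ := Δ) hf) :=
  fun _ _ h => Subtype.ext (graph_injective (congrArg Subtype.val h))

lemma bijective_elim_specialRayT_graphRay (hF : IsFan F) (hf : ConewiseLinear F f)
    (hΔ : IsSubfan Δ F) :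
    Function.Bijective fun o : Option (RayT F) => o.elim (specialRayT hF hf hΔ) (graphRay hf) := by
  have hne : ∀ ρ, graphRay (Δ := Δ) hf ρ ≠ specialRayT hF hf hΔ :=
    fun ρ h => graph_ne_specialRay (hf.map_zero hF) (congrArg Subtype.val h)
  refine ⟨?_, fun r => ?_⟩
  · rintro (_ | a) (_ | b) h
    exacts [rfl, (hne b h.symm).elim, (hne a h).elim, congrArg some (graphRay_injective hf h)]
  · rcases (mem_raysF_TMfan_iff hF hf hΔ).1 r.2 with ⟨ρ, hρ, h⟩ | h
    exacts [⟨some ⟨ρ, hρ⟩, Subtype.ext h.symm⟩, ⟨none, Subtype.ext h.symm⟩]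

lemma sum_rays_TMfan (hF : IsFan F) (hf : ConewiseLinear F f) (hΔ : IsSubfan Δ F)
    {M : Type*} [AddCommMonoid M] (g : RayT (TMfan F f Δ) → M) :
    ∑ r, g r = g (specialRayT hF hf hΔ) + ∑ ρ, g (graphRay hf ρ) := by
  rw [← Fintype.sum_bijective _ (bijective_elim_specialRayT_graphRay hF hf hΔ) _ g
    fun _ => rfl, Fintype.sum_option]
  rfl

lemma formsCone_of_formsCone_image (hF : IsFan F) (hf : ConewiseLinear F f) (hΔ : IsSubfan Δ F)
    {S : Finset (RayT F)} (h : FormsCone (TMfan F f Δ) (S.image (graphRay hf))) :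
    FormsCone F S := by
  obtain ⟨ξ, hξ, hS⟩ := h
  rcases mem_TMfan_iff.1 hξ with ⟨σ, hσ, rfl⟩ | ⟨δ, hδ, rfl⟩
  · exact ⟨σ, hσ, fun ρ => (graphRay_injective hf).mem_finset_image.symm.trans
      ((hS _).trans graph_subset_graph_iff)⟩
  · -- a cone over `δ ∈ Δ` contains the special ray, which is not the image of a ray of `F`
    have h₀ := (hS (specialRayT hF hf hΔ)).2 (specialRay_subset_upCone
      (hF.rat δ (hΔ.subset hδ)).zero_mem (hf.map_zero hF))
    obtain ⟨ρ, -, hρ⟩ := Finset.mem_image.1 h₀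
    exact absurd (congrArg Subtype.val hρ) (graph_ne_specialRay (hf.map_zero hF))

variable {e : Set (V n) → Fin n → ℤ} {et : Set (V (n + 1)) → Fin (n + 1) → ℤ}

lemma init_primitiveGen_graphRay (hF : IsFan F) (hf : ConewiseLinear F f) (hΔ : IsSubfan Δ F)
    (he : ∀ ρ ∈ raysF F, IsPrimitiveGen ρ (e ρ))
    (het : ∀ r ∈ raysF (TMfan F f Δ), IsPrimitiveGen r (et r)) (ρ : RayT F) :
    Fin.init (et (graphRay (Δ := Δ) hf ρ).1) = e ρ.1 := by
  obtain ⟨m, -, hm⟩ := exists_isPrimitiveGen_graph hf (Finset.mem_filter.1 ρ.2).1 (he ρ.1 ρ.2)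
  have hsc := (isFan_TMfan hF hf hΔ).convex _ (Finset.mem_filter.1 (graphRay (Δ := Δ) hf ρ).2).1
  rw [(het _ (graphRay hf ρ).2).unique hsc hm, Fin.init_snoc]

lemma primitiveGen_specialRayT (hF : IsFan F) (hf : ConewiseLinear F f) (hΔ : IsSubfan Δ F)
    (het : ∀ r ∈ raysF (TMfan F f Δ), IsPrimitiveGen r (et r)) :
    et (specialRayT hF hf hΔ).1 = Fin.snoc 0 1 :=
  (het _ (specialRayT hF hf hΔ).2).unique
    ((isFan_TMfan hF hf hΔ).convex _ (Finset.mem_filter.1 (specialRayT hF hf hΔ).2).1)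
    isPrimitiveGen_specialRay

lemma rename_xLin (hF : IsFan F) (hf : ConewiseLinear F f) (hΔ : IsSubfan Δ F)
    (he : ∀ ρ ∈ raysF F, IsPrimitiveGen ρ (e ρ))
    (het : ∀ r ∈ raysF (TMfan F f Δ), IsPrimitiveGen r (et r)) (ℓ : Fin n → ℤ) :
    rename (graphRay hf) (xLin F e ℓ) = xLin (TMfan F f Δ) et (Fin.snoc ℓ 0) := by
  rw [xLin, xLin, map_sum, sum_rays_TMfan hF hf hΔ, primitiveGen_specialRayT hF hf hΔ het]
  simp [pairZ_snoc_left, init_primitiveGen_graphRay hF hf hΔ he het]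

/-- The relation of `J` coming from the last coordinate expresses `x_e` through the `x_{Γ(ρ)}`. -/
lemma xLin_snoc_zero_one (hF : IsFan F) (hf : ConewiseLinear F f) (hΔ : IsSubfan Δ F)
    (het : ∀ r ∈ raysF (TMfan F f Δ), IsPrimitiveGen r (et r)) :
    xLin (TMfan F f Δ) et (Fin.snoc 0 1) = X (specialRayT hF hf hΔ)
      + rename (graphRay hf)
          (∑ ρ : RayT F, C (et (graphRay (Δ := Δ) hf ρ).1 (Fin.last n)) * X ρ) := by
  rw [xLin, sum_rays_TMfan hF hf hΔ, primitiveGen_specialRayT hF hf hΔ het, map_sum]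
  simp [pairZ_snoc_left]

lemma mk_X_specialRayT (hF : IsFan F) (hf : ConewiseLinear F f) (hΔ : IsSubfan Δ F)
    (het : ∀ r ∈ raysF (TMfan F f Δ), IsPrimitiveGen r (et r)) :
    Ideal.Quotient.mk (chowIdeal (TMfan F f Δ) et) (X (specialRayT hF hf hΔ))
      = Ideal.Quotient.mk _ (rename (graphRay hf)
          (-∑ ρ : RayT F, C (et (graphRay (Δ := Δ) hf ρ).1 (Fin.last n)) * X ρ)) := by
  rw [Ideal.Quotient.eq, map_neg, sub_neg_eq_add, ← xLin_snoc_zero_one hF hf hΔ het]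
  exact Ideal.mem_sup_right (Ideal.subset_span ⟨_, rfl⟩)

lemma chowIdeal_le_comap_rename (hF : IsFan F) (hf : ConewiseLinear F f) (hΔ : IsSubfan Δ F)
    (he : ∀ ρ ∈ raysF F, IsPrimitiveGen ρ (e ρ))
    (het : ∀ r ∈ raysF (TMfan F f Δ), IsPrimitiveGen r (et r)) :
    chowIdeal F e ≤ (chowIdeal (TMfan F f Δ) et).comap (rename (graphRay hf)) := by
  refine sup_le (Ideal.span_le.2 ?_) (Ideal.span_le.2 ?_)
  · rintro _ ⟨S, hS, rfl⟩
    refine Ideal.mem_sup_left (Ideal.subset_span ⟨S.image (graphRay hf),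
      fun h => hS (formsCone_of_formsCone_image hF hf hΔ h), ?_⟩)
    rw [map_prod, Finset.prod_image (graphRay_injective hf).injOn]
    simp only [rename_X]
  · rintro _ ⟨ℓ, rfl⟩
    exact Ideal.mem_sup_right (Ideal.subset_span ⟨Fin.snoc ℓ 0, rename_xLin hF hf hΔ he het ℓ⟩)

lemma surjective_of_forall_mk_X_mem_range {σ A : Type*} [Ring A] {I : Ideal (MvPolynomial σ ℤ)}
    (ψ : A →+* MvPolynomial σ ℤ ⧸ I) (h : ∀ r, ∃ a, ψ a = Ideal.Quotient.mk I (X r)) :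
    Function.Surjective ψ := by
  intro z
  obtain ⟨P, rfl⟩ := Ideal.Quotient.mk_surjective z
  induction P using MvPolynomial.induction_on with
  | C a => exact ⟨a, by rw [map_intCast, eq_intCast C a, map_intCast]⟩
  | add p q hp hq =>
    obtain ⟨u, hu⟩ := hp
    obtain ⟨v, hv⟩ := hq
    exact ⟨u + v, by rw [map_add, hu, hv, map_add]⟩
  | mul_X p r hp =>
    obtain ⟨u, hu⟩ := hp
    obtain ⟨w, hw⟩ := h r
    exact ⟨u * w, by rw [map_mul, hu, hw, map_mul]⟩

theorem exists_surjective_chowRing_hom (hF : IsFan F) (hf : ConewiseLinear F f)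
    (hΔ : IsSubfan Δ F) (he : ∀ ρ ∈ raysF F, IsPrimitiveGen ρ (e ρ))
    (het : ∀ r ∈ raysF (TMfan F f Δ), IsPrimitiveGen r (et r)) :
    ∃ ψ : ChowRing F e →+* ChowRing (TMfan F f Δ) et, Function.Surjective ψ ∧
      ∀ (ρ : RayT F) (r : RayT (TMfan F f Δ)), r.1 = graphMap f '' ρ.1 →
        ψ (Ideal.Quotient.mk (chowIdeal F e) (X ρ))
          = Ideal.Quotient.mk (chowIdeal (TMfan F f Δ) et) (X r) := by
  let ψ : ChowRing F e →ₐ[ℤ] ChowRing (TMfan F f Δ) et :=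
    Ideal.quotientMapₐ _ (rename (graphRay hf)) (chowIdeal_le_comap_rename hF hf hΔ he het)
  have hψ : ∀ P, ψ (Ideal.Quotient.mk _ P) = Ideal.Quotient.mk _ (rename (graphRay hf) P) :=
    fun _ => rfl
  refine ⟨ψ, surjective_of_forall_mk_X_mem_range
    (ψ : ChowRing F e →+* ChowRing (TMfan F f Δ) et) fun r => ?_, fun ρ r hr => ?_⟩
  · rcases (bijective_elim_specialRayT_graphRay hF hf hΔ).2 r with ⟨_ | ρ, rfl⟩
    · exact ⟨_, (hψ _).trans (mk_X_specialRayT hF hf hΔ het).symm⟩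
    · exact ⟨_, (hψ _).trans (congrArg _ (rename_X _ _))⟩
  · rw [RingHom.coe_coe, hψ, rename_X, show r = graphRay hf ρ from Subtype.ext hr]

end Chow

lemma isSubfan_divFaces {n d : ℕ} {F : Finset (Set (V n))} {o : Set (V n) → ℤ} (hF : IsFan F)
    (hne : ∃ τ ∈ F, dimC τ = d - 1 ∧ o τ = 1) : IsSubfan (divFaces F d o) F where
  nonempty := by
    obtain ⟨τ, hτ, hd, ho⟩ := hne
    exact ⟨τ, Finset.mem_filter.2 ⟨hτ, τ, hτ, hd, ho, isFaceOf_refl τ⟩⟩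
  subset := Finset.filter_subset _ _
  faces_mem δ hδ δ' hδ' := by
    obtain ⟨hδF, τ, hτ, hd, ho, hface⟩ := Finset.mem_filter.1 hδ
    exact Finset.mem_filter.2
      ⟨hF.faces_mem δ hδF δ' hδ', τ, hτ, hd, ho, hδ'.trans hface (hF.rat τ hτ)⟩

theorem tropical_modification_chow_surjective_general {n d : ℕ}
    (F : Finset (Set (V n))) (hF : IsTropicalFan F d) (hs : IsSimplicial F)
    (e : Set (V n) → Fin n → ℤ) (he : ∀ ρ ∈ raysF F, IsPrimitiveGen ρ (e ρ))
    (f : V n → ℝ) (hf : ConewiseLinear F f)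
    (o : Set (V n) → ℤ)
    (hne : ∃ τ ∈ F, dimC τ = d - 1 ∧ o τ = 1)
    (et : Set (V (n + 1)) → Fin (n + 1) → ℤ)
    (het : ∀ r ∈ raysF (TMfan F f (divFaces F d o)), IsPrimitiveGen r (et r)) :
    IsFan (TMfan F f (divFaces F d o)) ∧
    IsSimplicial (TMfan F f (divFaces F d o)) ∧
    (∀ ξ : Set (V (n + 1)), ξ ∈ raysF (TMfan F f (divFaces F d o)) ↔
      ((∃ ρ ∈ raysF F, ξ = graphMap f '' ρ) ∨ ξ = specialRay n)) ∧
    (∀ ρ ∈ raysF F, ∃ m : ℤ, (m : ℝ) = f (intVec (e ρ)) ∧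
      IsPrimitiveGen (graphMap f '' ρ) (Fin.snoc (e ρ) m)) ∧
    IsPrimitiveGen (specialRay n) (Fin.snoc (0 : Fin n → ℤ) 1) ∧
    ∃ ψ : ChowRing F e →+* ChowRing (TMfan F f (divFaces F d o)) et,
      Function.Surjective ψ ∧
      ∀ (ρ : RayT F) (r : RayT (TMfan F f (divFaces F d o))),
        r.1 = graphMap f '' ρ.1 →
        ψ (Ideal.Quotient.mk (chowIdeal F e) (X ρ))
          = Ideal.Quotient.mk (chowIdeal (TMfan F f (divFaces F d o)) et) (X r) := by
  have hΔ := isSubfan_divFaces hF.1 hne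
  exact ⟨isFan_TMfan hF.1 hf hΔ, isSimplicial_TMfan hF.1 hf hΔ hs,
    fun _ => mem_raysF_TMfan_iff hF.1 hf hΔ,
    fun ρ hρ => exists_isPrimitiveGen_graph hf (Finset.mem_filter.1 hρ).1 (he ρ hρ),
    isPrimitiveGen_specialRay, exists_surjective_chowRing_hom hF.1 hf hΔ he het⟩

/-- Let `Σ` be a simplicial tropical fan of pure dimension `d` and
`f` conewise integral linear with `ord_τ(f) ∈ {0,1}` everywhere and `ord_τ(f) = 1` for
at least one `τ`. Then `Σ̃ := TM_f(Σ)` is a simplicial rational fan in `ℝ^{n+1}` whose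
rays are the rays `Γ(ρ)`, `ρ ∈ Σ₁`, with primitive generators `(e_ρ, f(e_ρ))`,
together with the special ray `ℝ₊·e` with primitive generator `e`; and the ring
homomorphism `x_ρ ↦ x_{Γ(ρ)}` descends to a well-defined surjective (graded) ring
homomorphism `A•(Σ) → A•(Σ̃)`. -/
theorem tropical_modification_chow_surjective {n d : ℕ}
    (F : Finset (Set (V n))) (hF : IsTropicalFan F d) (hs : IsSimplicial F)
    (e : Set (V n) → Fin n → ℤ) (he : ∀ ρ ∈ raysF F, IsPrimitiveGen ρ (e ρ))
    (f : V n → ℝ) (hf : ConewiseLinear F f)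
    (o : Set (V n) → ℤ)
    (ho : ∀ τ ∈ F, dimC τ = d - 1 → IsOrderAt F d f τ (o τ))
    (h01 : ∀ τ ∈ F, dimC τ = d - 1 → o τ = 0 ∨ o τ = 1)
    (hne : ∃ τ ∈ F, dimC τ = d - 1 ∧ o τ = 1)
    (et : Set (V (n + 1)) → Fin (n + 1) → ℤ)
    (het : ∀ r ∈ raysF (TMfan F f (divFaces F d o)), IsPrimitiveGen r (et r)) :
    IsFan (TMfan F f (divFaces F d o)) ∧
    IsSimplicial (TMfan F f (divFaces F d o)) ∧
    (∀ ξ : Set (V (n + 1)), ξ ∈ raysF (TMfan F f (divFaces F d o)) ↔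
      ((∃ ρ ∈ raysF F, ξ = graphMap f '' ρ) ∨ ξ = specialRay n)) ∧
    (∀ ρ ∈ raysF F, ∃ m : ℤ, (m : ℝ) = f (intVec (e ρ)) ∧
      IsPrimitiveGen (graphMap f '' ρ) (Fin.snoc (e ρ) m)) ∧
    IsPrimitiveGen (specialRay n) (Fin.snoc (0 : Fin n → ℤ) 1) ∧
    ∃ ψ : ChowRing F e →+* ChowRing (TMfan F f (divFaces F d o)) et,
      Function.Surjective ψ ∧
      ∀ (ρ : RayT F) (r : RayT (TMfan F f (divFaces F d o))),
        r.1 = graphMap f '' ρ.1 →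
        ψ (Ideal.Quotient.mk (chowIdeal F e) (X ρ))
          = Ideal.Quotient.mk (chowIdeal (TMfan F f (divFaces F d o)) et) (X r) :=
  tropical_modification_chow_surjective_general F hF hs e he f hf o hne et het

end
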